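/- Let W = (w_{ij}) be a symmetric array of nonnegative real weights (including nonnegative self-edges w_{ii} ≥ 0) on a vertex set V, and for a finite subset S define w(S) = Σ_{i,j∈S, i<j} w_{ij} + Σ_{i∈S} w_{ii}. Let S be a finite subset with |S| = m ≥ k ≥ 2, and let S̃ be obtained from S by repeatedly removing a vertex v minimizing Σ_{j} w_{vj} over the current set, until exactly k vertices remain. Then w(S̃) ≥ (k(k−1))/(m(m−1))·w(S). If instead |S| ≤ k and S̃ is obtained by adding arbitrary vertices until |S̃| = k, then w(S̃) ≥ w(S). -/

import Mathlib

/-!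
Write `d_v(S) = ∑_{j ∈ S} w v j`. By symmetry, `∑_{v ∈ S} d_v(S) = 2 w(S) - ∑_{v ∈ S} w v v`,
and removing `v` from `S` lowers the weight by exactly `d_v(S)`. Since the self-edges are
nonnegative, a vertex of minimal `d_v` has `d_v(S) ≤ 2 w(S) / |S|`, so one greedy step from
`|S| = n` vertices keeps at least the fraction `(n - 2) / n` of the weight. Hence the
density `w(S) / (|S| (|S| - 1))` never decreases along the greedy chain while `|S| ≥ 3`, and the ratio
`k (k - 1) / (m (m - 1))` telescopes. Adding vertices only adds nonnegative weight.
-/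

/-- The total weight w(S) of the subgraph induced by S: each (non-self) edge {i,j},
i < j, counted once, plus each self-edge counted once. -/
def inducedWeight {V : Type*} [LinearOrder V] (w : V → V → ℝ) (S : Finset V) : ℝ :=
  ∑ p ∈ (S ×ˢ S).filter (fun p => p.1 < p.2), w p.1 p.2 + ∑ i ∈ S, w i i

/-- One step of the greedy resizing procedure: pass from S to S∖{v}, where v minimizes
the induced weight Σ_{j∈S} w_{vj} over the vertices of S. -/
def GreedyStep {V : Type*} [LinearOrder V] (w : V → V → ℝ) (S S' : Finset V) : Prop :=
  ∃ v ∈ S, (∀ u ∈ S, ∑ j ∈ S, w v j ≤ ∑ j ∈ S, w u j) ∧ S' = S.erase v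

open Finset

section

variable {V : Type*} [LinearOrder V] {w : V → V → ℝ}

lemma inducedWeight_mono (hnonneg : ∀ i j, 0 ≤ w i j) {S T : Finset V} (hST : S ⊆ T) :
    inducedWeight w S ≤ inducedWeight w T :=
  add_le_add
    (sum_le_sum_of_subset_of_nonneg (filter_subset_filter _ (product_subset_product hST hST))
      fun _ _ _ => hnonneg _ _)
    (sum_le_sum_of_subset_of_nonneg hST fun _ _ _ => hnonneg _ _)

lemma two_mul_inducedWeight (hsymm : ∀ i j, w i j = w j i) (S : Finset V) :
    2 * inducedWeight w S = ∑ i ∈ S, ∑ j ∈ S, w i j + ∑ i ∈ S, w i i := by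
  have hsplit : ∀ i j, w i j = (if i < j then w i j else 0) + (if j < i then w j i else 0)
      + (if i = j then w i j else 0) := by
    intro i j
    rcases lt_trichotomy i j with h | rfl | h
    · simp [h, h.ne, h.not_gt]
    · simp
    · simp [h, h.ne', h.not_gt, hsymm i j]
  have hswap : ∑ i ∈ S, ∑ j ∈ S, (if j < i then w j i else 0)
      = ∑ i ∈ S, ∑ j ∈ S, (if i < j then w i j else 0) := sum_comm
  calc 2 * inducedWeight w S
      = ∑ i ∈ S, ∑ j ∈ S, ((if i < j then w i j else 0) + (if j < i then w j i else 0)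
          + (if i = j then w i j else 0)) + ∑ i ∈ S, w i i := by
        simp only [sum_add_distrib, hswap, sum_ite_eq, inducedWeight, sum_filter, sum_product]
        rw [sum_ite_of_true fun _ h => h]
        ring
    _ = ∑ i ∈ S, ∑ j ∈ S, w i j + ∑ i ∈ S, w i i := by simp only [← hsplit]

lemma inducedWeight_insert (hsymm : ∀ i j, w i j = w j i) {S : Finset V} {v : V} (hv : v ∉ S) :
    inducedWeight w (insert v S) = inducedWeight w S + ∑ j ∈ insert v S, w v j := by
  have hcol : ∑ i ∈ S, w i v = ∑ j ∈ S, w v j := sum_congr rfl fun i _ => hsymm i v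
  have hS := two_mul_inducedWeight hsymm S
  have hvS := two_mul_inducedWeight hsymm (insert v S)
  simp only [sum_insert hv, sum_add_distrib, hcol] at hvS ⊢
  linarith

lemma inducedWeight_erase (hsymm : ∀ i j, w i j = w j i) {S : Finset V} {v : V} (hv : v ∈ S) :
    inducedWeight w (S.erase v) = inducedWeight w S - ∑ j ∈ S, w v j := by
  conv_rhs => rw [← insert_erase hv, inducedWeight_insert hsymm (notMem_erase v S)]
  rw [insert_erase hv]
  ring

lemma GreedyStep.card_add_one {S S' : Finset V} (h : GreedyStep w S S') :
    S'.card + 1 = S.card := by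
  obtain ⟨v, hv, -, rfl⟩ := h
  exact card_erase_add_one hv

lemma card_le_of_reflTransGen_greedyStep {S T : Finset V}
    (h : Relation.ReflTransGen (GreedyStep w) S T) : T.card ≤ S.card := by
  induction h with
  | refl => exact le_rfl
  | tail _ hstep ih => have := hstep.card_add_one; omega

lemma GreedyStep.card_sub_two_mul_le (hsymm : ∀ i j, w i j = w j i) (hdiag : ∀ i, 0 ≤ w i i)
    {S S' : Finset V} (h : GreedyStep w S S') :
    ((S.card : ℝ) - 2) * inducedWeight w S ≤ S.card * inducedWeight w S' := by
  obtain ⟨v, hv, hmin, rfl⟩ := h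
  have hdeg : (S.card : ℝ) * ∑ j ∈ S, w v j ≤ ∑ u ∈ S, ∑ j ∈ S, w u j := by
    simpa [nsmul_eq_mul] using card_nsmul_le_sum S _ _ hmin
  have hdiag_sum : 0 ≤ ∑ i ∈ S, w i i := sum_nonneg fun i _ => hdiag i
  have htwo := two_mul_inducedWeight hsymm S
  rw [inducedWeight_erase hsymm hv]
  linarith

lemma GreedyStep.div_le_div (hsymm : ∀ i j, w i j = w j i) (hdiag : ∀ i, 0 ≤ w i i)
    {S S' : Finset V} (h : GreedyStep w S S') (hS : 3 ≤ S.card) :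
    inducedWeight w S / (S.card * (S.card - 1))
      ≤ inducedWeight w S' / (S'.card * (S'.card - 1)) := by
  have hstep := h.card_sub_two_mul_le hsymm hdiag
  have hcard : (S'.card : ℝ) = S.card - 1 := by
    rw [eq_sub_iff_add_eq]; exact_mod_cast h.card_add_one
  have hn : (3 : ℝ) ≤ S.card := by exact_mod_cast hS
  rw [hcard, div_le_div_iff₀ (by nlinarith) (by nlinarith)]
  nlinarith

lemma div_le_div_of_reflTransGen_greedyStep (hsymm : ∀ i j, w i j = w j i)
    (hdiag : ∀ i, 0 ≤ w i i) {S T : Finset V} (h : Relation.ReflTransGen (GreedyStep w) S T)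
    (hT : 2 ≤ T.card) :
    inducedWeight w S / (S.card * (S.card - 1))
      ≤ inducedWeight w T / (T.card * (T.card - 1)) := by
  induction h using Relation.ReflTransGen.head_induction_on with
  | refl => exact le_rfl
  | head hstep hrest ih =>
    have := hstep.card_add_one
    have := card_le_of_reflTransGen_greedyStep hrest
    exact (hstep.div_le_div hsymm hdiag (by omega)).trans ih

end

/-- For a symmetric nonnegative weight array w: (i) if T is obtained from
S (|S| = m ≥ k ≥ 2) by repeatedly removing a minimizing vertex until |T| = k, then
w(T) ≥ (k(k−1))/(m(m−1))·w(S); (ii) if instead |S| ≤ k and T ⊇ S with |T| = k is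
obtained by adding arbitrary vertices, then w(T) ≥ w(S). -/
theorem stmt_15 {V : Type*} [LinearOrder V] (w : V → V → ℝ)
    (hsymm : ∀ i j, w i j = w j i) (hnonneg : ∀ i j, 0 ≤ w i j) (k : ℕ) (hk : 2 ≤ k) :
    (∀ (S T : Finset V) (m : ℕ), S.card = m → k ≤ m →
      Relation.ReflTransGen (GreedyStep w) S T → T.card = k →
      inducedWeight w T
        ≥ ((k : ℝ) * ((k : ℝ) - 1)) / ((m : ℝ) * ((m : ℝ) - 1)) * inducedWeight w S) ∧
    (∀ S T : Finset V, S.card ≤ k → S ⊆ T → T.card = k →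
      inducedWeight w T ≥ inducedWeight w S) := by
  refine ⟨fun S T m hS _ hST hT => ?_, fun S T _ hST _ => inducedWeight_mono hnonneg hST⟩
  have hdensity := div_le_div_of_reflTransGen_greedyStep hsymm (fun i => hnonneg i i) hST
    (hT ▸ hk)
  rw [hS, hT] at hdensity
  have hkpos : (0 : ℝ) < k * (k - 1) := by
    have : (2 : ℝ) ≤ k := by exact_mod_cast hk
    nlinarith
  rw [ge_iff_le, div_mul_eq_mul_div, mul_div_assoc, ← le_div_iff₀' hkpos]
  exact hdensity
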